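/- arXiv:2105.14618 — 3 statements merged into one kernel-verified Lean document; each statement's English description precedes it below -/
import Mathlib

section
/- Let ℓ ≥ 2 be an integer and F > 0 a real number. Let e₁, …, e_ℓ be independent real-valued random variables, each distributed according to the Gaussian measure with mean 0 and variance 2F (the 2-stable distribution with scale F). Then E[ ∏_{k=1}^{ℓ} |e_k|^{2/ℓ} ] = F · ( (2/π) · Γ(2/ℓ) · Γ(1 − 1/ℓ) · sin(π/ℓ) )^{ℓ}. Consequently the geometric mean estimator ĥ := ( ∏_{k=1}^{ℓ} |e_k|^{2/ℓ} ) / ( (2/π) Γ(2/ℓ) Γ(1 − 1/ℓ) sin(π/ℓ) )^{ℓ} satisfies E[ĥ] = F. -/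
open MeasureTheory ProbabilityTheory Finset Real
open scoped NNReal

/-!
Substituting into Euler's integral gives the absolute moments of a centred Gaussian of variance
`2F`: `E|X|^(2s) = (4F)^s Γ(s + 1/2) / √π`. Legendre's duplication formula and Euler's reflection
formula rewrite `4^s Γ(s + 1/2) / √π` as `C(s) = (2/π) Γ(2s) Γ(1 - s) sin(πs)`, so for `s = 1/ℓ`
each factor `|e_k|^(2/ℓ)` has mean `F^(1/ℓ) C(1/ℓ)`, and independence multiplies the `ℓ` means
to `F C(1/ℓ)^ℓ`.
-/

theorem integral_abs_rpow_gaussianReal {v : ℝ≥0} (hv : v ≠ 0) {q : ℝ} (hq : -1 < q) :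
    ∫ x, |x| ^ q ∂gaussianReal 0 v = (2 * v) ^ (q / 2) * Gamma ((q + 1) / 2) / √π := by
  have hv0 : (0 : ℝ) < v := by positivity
  have hdensity : ∀ x : ℝ, gaussianPDFReal 0 v x • |x| ^ q
      = (√(2 * π * v))⁻¹ * (|x| ^ q * exp (-(2 * (v : ℝ))⁻¹ * |x| ^ (2 : ℝ))) := by
    intro x
    rw [gaussianPDFReal, rpow_two, sq_abs, smul_eq_mul, sub_zero]
    ring_nf
  simp_rw [integral_gaussianReal_eq_integral_smul hv, hdensity]
  rw [integral_comp_abs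
      (f := fun t ↦ (√(2 * π * v))⁻¹ * (t ^ q * exp (-(2 * (v : ℝ))⁻¹ * t ^ (2 : ℝ)))),
    integral_const_mul, integral_rpow_mul_exp_neg_mul_rpow two_pos hq (by positivity),
    neg_div, rpow_neg (by positivity), inv_rpow (by positivity), inv_inv,
    show (q + 1) / 2 = q / 2 + 1 / 2 by ring, rpow_add (by positivity), ← sqrt_eq_rpow,
    show 2 * π * v = 2 * v * π by ring, sqrt_mul (by positivity)]
  have : √(2 * (v : ℝ)) ≠ 0 := by positivity
  field_simp

theorem two_div_pi_mul_Gamma_mul_Gamma_one_sub_mul_sin {s : ℝ} (hs₀ : 0 < s) (hs₁ : s < 1) :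
    2 / π * Gamma (2 * s) * Gamma (1 - s) * sin (π * s) = 4 ^ s * Gamma (s + 1 / 2) / √π := by
  have hsin : sin (π * s) ≠ 0 :=
    (sin_pos_of_pos_of_lt_pi (by positivity) (by nlinarith [pi_pos])).ne'
  have hfour : (4 : ℝ) ^ s * 2 ^ (1 - 2 * s) = 2 := by
    rw [show (4 : ℝ) = 2 ^ (2 : ℝ) by norm_num, ← rpow_mul zero_le_two, ← rpow_add two_pos]
    norm_num
  refine mul_right_cancel₀ (Gamma_pos_of_pos hs₀).ne' ?_
  calc 2 / π * Gamma (2 * s) * Gamma (1 - s) * sin (π * s) * Gamma s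
      = 2 / π * Gamma (2 * s) * sin (π * s) * (Gamma s * Gamma (1 - s)) := by ring
    _ = 2 * Gamma (2 * s) := by rw [Gamma_mul_Gamma_one_sub]; field_simp
    _ = 4 ^ s * 2 ^ (1 - 2 * s) * Gamma (2 * s) := by rw [hfour]
    _ = 4 ^ s / √π * (Gamma s * Gamma (s + 1 / 2)) := by
      rw [Gamma_mul_Gamma_add_half]; field_simp
    _ = 4 ^ s * Gamma (s + 1 / 2) / √π * Gamma s := by ring

theorem integral_abs_rpow_two_mul_gaussianReal {F s : ℝ} (hF : 0 < F) (hs₀ : 0 < s)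
    (hs₁ : s < 1) :
    ∫ x, |x| ^ (2 * s) ∂gaussianReal 0 (2 * F).toNNReal
      = F ^ s * (2 / π * Gamma (2 * s) * Gamma (1 - s) * sin (π * s)) := by
  rw [integral_abs_rpow_gaussianReal (by simpa using hF) (by linarith),
    two_div_pi_mul_Gamma_mul_Gamma_one_sub_mul_sin hs₀ hs₁, Real.coe_toNNReal _ (by positivity),
    show 2 * (2 * F) = 4 * F by ring, mul_rpow (by norm_num) hF.le,
    show 2 * s / 2 = s by ring, show (2 * s + 1) / 2 = s + 1 / 2 by ring]
  ring

theorem geometric_mean_estimator_unbiased_general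
    {Ω : Type*} [MeasurableSpace Ω] (μ : Measure Ω)
    (ℓ : ℕ) (hℓ : 2 ≤ ℓ) (F : ℝ) (hF : 0 < F)
    (e : Fin ℓ → Ω → ℝ) (he : ∀ k, Measurable (e k))
    (hindep : iIndepFun e μ)
    (hlaw : ∀ k, μ.map (e k) = gaussianReal 0 ((2 * F : ℝ).toNNReal)) :
    (∫ ω, ∏ k, |e k ω| ^ ((2 : ℝ) / ℓ) ∂μ
        = F * (2 / π * Real.Gamma (2 / ℓ) * Real.Gamma (1 - 1 / ℓ) * Real.sin (π / ℓ)) ^ ℓ) ∧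
      (∫ ω, (∏ k, |e k ω| ^ ((2 : ℝ) / ℓ))
          / (2 / π * Real.Gamma (2 / ℓ) * Real.Gamma (1 - 1 / ℓ) * Real.sin (π / ℓ)) ^ ℓ ∂μ
        = F) := by
  set s : ℝ := (ℓ : ℝ)⁻¹
  have hℓ₀ : (0 : ℝ) < ℓ := by positivity
  have hs₀ : 0 < s := inv_pos.mpr hℓ₀
  have hs₁ : s < 1 := inv_lt_one_of_one_lt₀ (by exact_mod_cast hℓ)
  simp only [show (2 : ℝ) / ℓ = 2 * s by ring, show (1 : ℝ) / ℓ = s by ring,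
    show π / ℓ = π * s by ring]
  have hC : 0 < 2 / π * Gamma (2 * s) * Gamma (1 - s) * sin (π * s) := by
    rw [two_div_pi_mul_Gamma_mul_Gamma_one_sub_mul_sin hs₀ hs₁]
    have := Gamma_pos_of_pos (by positivity : 0 < s + 1 / 2)
    positivity
  set C := 2 / π * Gamma (2 * s) * Gamma (1 - s) * sin (π * s)
  have habs : Measurable fun x : ℝ ↦ |x| ^ (2 * s) := by fun_prop
  have hmoment : ∀ k, ∫ ω, |e k ω| ^ (2 * s) ∂μ = F ^ s * C := fun k ↦ by
    rw [← integral_map (f := fun x ↦ |x| ^ (2 * s)) (he k).aemeasurable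
      habs.aestronglyMeasurable, hlaw k,
      integral_abs_rpow_two_mul_gaussianReal hF hs₀ hs₁]
  have hmean : ∫ ω, ∏ k, |e k ω| ^ (2 * s) ∂μ = F * C ^ ℓ := by
    rw [hindep.integral_fun_prod_comp (f := fun _ x ↦ |x| ^ (2 * s)) (fun k ↦ (he k).aemeasurable)
      fun _ ↦ habs.aestronglyMeasurable]
    simp only [hmoment, prod_const, card_univ, Fintype.card_fin, mul_pow, ← rpow_natCast (F ^ s),
      ← rpow_mul hF.le, show s * ℓ = 1 from inv_mul_cancel₀ hℓ₀.ne', rpow_one]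
  refine ⟨hmean, ?_⟩
  rw [integral_div, hmean, mul_div_cancel_right₀ _ (pow_pos hC ℓ).ne']

/-- Unbiasedness of the geometric mean estimator (Decode step of Fed-χ²):
for i.i.d. 2-stable samples of scale `F` (Gaussians with variance `2F`),
`E[∏ |e_k|^(2/ℓ)] = F · ((2/π)Γ(2/ℓ)Γ(1−1/ℓ)sin(π/ℓ))^ℓ`, and consequently the
normalized geometric mean estimator has expectation `F`. -/
theorem geometric_mean_estimator_unbiased
    {Ω : Type*} [MeasurableSpace Ω] (μ : Measure Ω) [IsProbabilityMeasure μ]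
    (ℓ : ℕ) (hℓ : 2 ≤ ℓ) (F : ℝ) (hF : 0 < F)
    (e : Fin ℓ → Ω → ℝ) (he : ∀ k, Measurable (e k))
    (hindep : iIndepFun e μ)
    (hlaw : ∀ k, μ.map (e k) = gaussianReal 0 ((2 * F : ℝ).toNNReal)) :
    (∫ ω, ∏ k, |e k ω| ^ ((2 : ℝ) / ℓ) ∂μ
        = F * (2 / π * Real.Gamma (2 / ℓ) * Real.Gamma (1 - 1 / ℓ) * Real.sin (π / ℓ)) ^ ℓ) ∧
      (∫ ω, (∏ k, |e k ω| ^ ((2 : ℝ) / ℓ))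
          / (2 / π * Real.Gamma (2 / ℓ) * Real.Gamma (1 - 1 / ℓ) * Real.sin (π / ℓ)) ^ ℓ ∂μ
        = F) :=
  geometric_mean_estimator_unbiased_general μ ℓ hℓ F hF e he hindep hlaw
end

section
/- Let ℓ₀ ≥ 2 be an integer, s > 0 a real number, ε a real number with 0 < ε < 1, and δ a real number with 0 < δ < 1. Define C₁ := (2/π)·arctan( log(1+ε)/π ), t_R := C₁·log(1+ε) − C₁·γ − log( (2/π) Γ(2C₁) Γ(1 − C₁) sin(πC₁) ) (γ the Euler–Mascheroni constant), C₂ := 2ε/π², and t_L := −C₂·log(1−ε) − log( −(2/π) Γ(−2C₂) Γ(1 + C₂) sin(πC₂) ) − ℓ₀·C₂·log( (2/π) Γ(2/ℓ₀) Γ(1 − 1/ℓ₀) sin(π/ℓ₀) ). Assume t_R > 0 and t_L > 0. Then for every integer ℓ with ℓ > ℓ₀ and ℓ · min(t_R, t_L) ≥ log(2/δ), if e₁, …, e_ℓ are independent real-valued random variables each distributed according to the Gaussian measure with mean 0 and variance 2s, and ŝ := ( ∏_{k=1}^{ℓ} |e_k|^{2/ℓ} ) / ( (2/π) Γ(2/ℓ)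 Γ(1 − 1/ℓ) sin(π/ℓ) )^{ℓ}, then P( ŝ < (1−ε)·s ∨ ŝ > (1+ε)·s ) ≤ δ. -/
/-!
For `e ~ 𝒩(0, 2s)` and `c > -1/2` the absolute moments are explicit, `E |e| ^ (2c) = s ^ c m(c)`
with `m(c) = 4 ^ c Γ(c + 1/2) / √π`; by the reflection and duplication formulas this is the
paper's `(2/π) Γ(2c) Γ(1-c) sin(πc)`. By independence, Markov's inequality for `ŝ ^ c` with
`c = C₁ > 0` bounds the right tail, and with `c = -C₂ < 0` the left tail (as `ŝ > 0` a.s.), by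
`exp (ℓ (log m(c) - c log(1 ± ε) - c ℓ log m(1/ℓ)))`.

The last term is controlled by the convexity of `log m`, inherited from the log-convexity of `Γ`.
Since `log m(0) = 0` and `(log m)'(0) = -γ`, the tangent line gives `ℓ log m(1/ℓ) ≥ -γ`, and the
monotonicity of slopes from `0` gives `ℓ log m(1/ℓ) ≤ ℓ₀ log m(1/ℓ₀)` for `ℓ ≥ ℓ₀`. Each tail is
then at most `exp (-ℓ t) ≤ δ / 2`.
-/

open MeasureTheory ProbabilityTheory Finset Real
open scoped NNReal ENNReal

namespace FedChi2

/-- `E |X| ^ (2c)` for `X ~ 𝒩(0, 2)`, the standard symmetric 2-stable law. -/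
noncomputable def stableAbsMoment (c : ℝ) : ℝ := 4 ^ c * Gamma (c + 1 / 2) / √π

lemma stableAbsMoment_pos {c : ℝ} (hc : -(1 / 2) < c) : 0 < stableAbsMoment c := by
  unfold stableAbsMoment
  have := Gamma_pos_of_pos (show 0 < c + 1 / 2 by linarith)
  positivity

@[simp]
lemma stableAbsMoment_zero : stableAbsMoment 0 = 1 := by
  rw [stableAbsMoment, zero_add, one_div, ← one_div, Gamma_one_half_eq, rpow_zero, one_mul,
    div_self (sqrt_pos.2 pi_pos).ne']

lemma sin_pi_mul_ne_zero {c : ℝ} (h₀ : 0 < c) (h₁ : c < 1) : sin (π * c) ≠ 0 :=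
  (sin_pos_of_pos_of_lt_pi (by positivity) (by nlinarith [pi_pos])).ne'

lemma two_div_pi_mul_arctan_mem_Ioo {x : ℝ} (hx : 0 < x) : 2 / π * arctan x ∈ Set.Ioo 0 1 := by
  have := arctan_pos.2 hx
  refine ⟨by positivity, ?_⟩
  rw [div_mul_eq_mul_div, div_lt_one pi_pos]
  linarith [arctan_lt_pi_div_two x]

lemma stableAbsMoment_eq_Gamma_mul_sin {c : ℝ} (hc : sin (π * c) ≠ 0) :
    stableAbsMoment c = 2 / π * Gamma (2 * c) * Gamma (1 - c) * sin (π * c) := by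
  have hΓ : Gamma c ≠ 0 := Gamma_ne_zero fun m hm ↦ hc <| by
    rw [hm, mul_neg, sin_neg, neg_eq_zero, mul_comm]; exact sin_nat_mul_pi m
  have hrefl := Gamma_mul_Gamma_one_sub c
  have hdup := Gamma_mul_Gamma_add_half c
  have h4 : (4 : ℝ) ^ c * 2 ^ (1 - 2 * c) = 2 := by
    rw [show (4 : ℝ) = 2 ^ (2 : ℝ) by norm_num, ← rpow_mul zero_le_two, ← rpow_add two_pos]
    norm_num
  have hrefl' : Gamma c * Gamma (1 - c) * sin (π * c) = π := by
    rw [hrefl]; field_simp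
  have hsqrt : √π ≠ 0 := (sqrt_pos.2 pi_pos).ne'
  apply mul_right_cancel₀ hΓ
  unfold stableAbsMoment
  linear_combination (norm := skip) (4 ^ c / √π) * hdup + Gamma (2 * c) * h4
    - 2 / π * Gamma (2 * c) * hrefl'
  field_simp
  ring

lemma stableAbsMoment_one_div_natCast {n : ℕ} (hn : 2 ≤ n) :
    stableAbsMoment (1 / n) = 2 / π * Gamma (2 / n) * Gamma (1 - 1 / n) * sin (π / n) := by
  have hn' : (2 : ℝ) ≤ n := by exact_mod_cast hn
  rw [stableAbsMoment_eq_Gamma_mul_sin (sin_pi_mul_ne_zero (by positivity)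
    ((div_lt_one (by positivity)).2 (by linarith))), mul_one_div, mul_one_div]

lemma stableAbsMoment_neg {c : ℝ} (hc : sin (π * c) ≠ 0) :
    stableAbsMoment (-c) = -(2 / π) * Gamma (-(2 * c)) * Gamma (1 + c) * sin (π * c) := by
  rw [stableAbsMoment_eq_Gamma_mul_sin (by rwa [mul_neg, sin_neg, neg_ne_zero]), mul_neg, mul_neg,
    sin_neg, sub_neg_eq_add]
  ring

lemma convexOn_log_stableAbsMoment :
    ConvexOn ℝ (Set.Ioi (-(1 / 2))) fun c ↦ log (stableAbsMoment c) := by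
  have hΓ : ConvexOn ℝ (Set.Ioi (-(1 / 2))) fun c ↦ log (Gamma (1 / 2 + c)) := by
    have hs : (fun z : ℝ ↦ 1 / 2 + z) ⁻¹' Set.Ioi 0 = Set.Ioi (-(1 / 2)) := by
      ext c; simp only [Set.mem_preimage, Set.mem_Ioi]; constructor <;> intro h <;> linarith
    have h := convexOn_log_Gamma.translate_right (1 / 2 : ℝ)
    rw [hs] at h
    exact h
  refine ((LinearMap.mul ℝ ℝ (log 4)).convexOn (convex_Ioi _) |>.add hΓ |>.add_const
    (-log √π)).congr fun c hc ↦ ?_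
  have := Gamma_pos_of_pos (show 0 < c + 1 / 2 by linarith [Set.mem_Ioi.1 hc])
  simp only [stableAbsMoment, Pi.add_apply, LinearMap.mul_apply']
  rw [log_div (by positivity) (sqrt_pos.2 pi_pos).ne', log_mul (by positivity) this.ne',
    log_rpow (by norm_num), add_comm c]
  ring

lemma hasDerivAt_log_stableAbsMoment_zero :
    HasDerivAt (fun c ↦ log (stableAbsMoment c)) (-eulerMascheroniConstant) 0 := by
  have hΓ := hasDerivAt_Gamma_one_half
  rw [← zero_add (1 / 2 : ℝ)] at hΓ
  have h4 := (hasStrictDerivAt_const_rpow (a := 4) (by norm_num) 0).hasDerivAt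
  have hF : HasDerivAt stableAbsMoment _ 0 := ((h4.mul (hΓ.comp_add_const 0 _)).div_const √π)
  convert hF.log (stableAbsMoment_pos (by norm_num)).ne' using 1
  have hlog4 : log 4 = 2 * log 2 := by
    rw [show (4 : ℝ) = 2 ^ 2 by norm_num, log_pow]; norm_num
  have hsqrt : √π ≠ 0 := (sqrt_pos.2 pi_pos).ne'
  rw [stableAbsMoment_zero, zero_add, Gamma_one_half_eq, hlog4]
  field_simp
  ring

lemma neg_eulerMascheroniConstant_mul_le_log_stableAbsMoment {c : ℝ} (hc : 0 < c) :
    -eulerMascheroniConstant * c ≤ log (stableAbsMoment c) := by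
  have h := convexOn_log_stableAbsMoment.le_slope_of_hasDerivAt (by norm_num)
    (show c ∈ Set.Ioi (-(1 / 2)) from by simp only [Set.mem_Ioi]; linarith) hc
    hasDerivAt_log_stableAbsMoment_zero
  rwa [slope_def_field, stableAbsMoment_zero, log_one, sub_zero, sub_zero, le_div_iff₀ hc] at h

lemma log_stableAbsMoment_div_le_div {x y : ℝ} (hx : -(1 / 2) < x) (hx0 : x ≠ 0) (hy0 : y ≠ 0)
    (hxy : x ≤ y) : log (stableAbsMoment x) / x ≤ log (stableAbsMoment y) / y := by
  have h := convexOn_log_stableAbsMoment.slope_mono (show (0 : ℝ) ∈ Set.Ioi (-(1 / 2)) by norm_num)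
    ⟨hx, hx0⟩ ⟨show y ∈ Set.Ioi (-(1 / 2)) from by simp only [Set.mem_Ioi] at *; linarith, hy0⟩ hxy
  simpa [slope_def_field] using h

lemma integral_abs_rpow_gaussianReal {V : ℝ≥0} (hV : V ≠ 0) {c : ℝ} (hc : -(1 / 2) < c) :
    ∫ x, |x| ^ (2 * c) ∂gaussianReal 0 V = ((V : ℝ) / 2) ^ c * stableAbsMoment c := by
  have hV0 : (0 : ℝ) < V := by positivity
  let g : ℝ → ℝ := fun y ↦ (√(2 * π * V))⁻¹ * (y ^ (2 * c) * exp (-(2 * (V : ℝ))⁻¹ * y ^ (2 : ℝ)))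
  have hpdf : ∀ x : ℝ, gaussianPDFReal 0 V x • |x| ^ (2 * c) = g |x| := fun x ↦ by
    simp only [g, gaussianPDFReal, smul_eq_mul, rpow_two, sq_abs, sub_zero]; ring_nf
  simp_rw [integral_gaussianReal_eq_integral_smul hV, hpdf]
  rw [integral_comp_abs, integral_const_mul,
    integral_rpow_mul_exp_neg_mul_rpow two_pos (by linarith) (by positivity)]
  have hsqrt : √(2 * π * V) = √π * (2 * V) ^ (1 / 2 : ℝ) := by
    rw [← sqrt_eq_rpow, ← sqrt_mul pi_pos.le]; ring_nf
  have hpow : ((2 * (V : ℝ))⁻¹) ^ (-(2 * c + 1) / 2)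
      = ((V : ℝ) / 2) ^ c * 4 ^ c * (2 * V) ^ (1 / 2 : ℝ) := by
    rw [inv_rpow (by positivity), ← rpow_neg (by positivity),
      ← mul_rpow (by positivity) (by norm_num), show (V : ℝ) / 2 * 4 = 2 * V by ring,
      ← rpow_add (by positivity)]
    ring_nf
  rw [hsqrt, hpow, stableAbsMoment, show (2 * c + 1) / 2 = c + 1 / 2 by ring]
  have : (0 : ℝ) < (2 * V) ^ (1 / 2 : ℝ) := by positivity
  field_simp

lemma lintegral_abs_rpow_gaussianReal {V : ℝ≥0} (hV : V ≠ 0) {c : ℝ} (hc : -(1 / 2) < c) :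
    ∫⁻ x, ENNReal.ofReal (|x| ^ (2 * c)) ∂gaussianReal 0 V
      = ENNReal.ofReal (((V : ℝ) / 2) ^ c * stableAbsMoment c) := by
  have hpos : 0 < ((V : ℝ) / 2) ^ c * stableAbsMoment c := by
    have := stableAbsMoment_pos hc
    positivity
  rw [← integral_abs_rpow_gaussianReal hV hc] at hpos ⊢
  exact (ofReal_integral_eq_lintegral_ofReal (Integrable.of_integral_ne_zero hpos.ne')
    (ae_of_all _ fun x ↦ by positivity)).symm

section IndependentGaussians

variable {Ω ι : Type*} [MeasurableSpace Ω] {μ : Measure Ω} [Fintype ι] {e : ι → Ω → ℝ}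
  {V : ℝ≥0} {c : ℝ}

lemma lintegral_prod_abs_rpow (hmeas : ∀ k, Measurable (e k)) (hindep : iIndepFun e μ)
    (hlaw : ∀ k, μ.map (e k) = gaussianReal 0 V) (hV : V ≠ 0) (hc : -(1 / 2) < c) :
    ∫⁻ ω, ∏ k, ENNReal.ofReal (|e k ω| ^ (2 * c)) ∂μ
      = ENNReal.ofReal ((((V : ℝ) / 2) ^ c * stableAbsMoment c) ^ Fintype.card ι) := by
  have hf : Measurable fun x : ℝ ↦ ENNReal.ofReal (|x| ^ (2 * c)) := by fun_prop
  rw [lintegral_prod_eq_prod_lintegral_of_indepFun univ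
    (fun k ω ↦ ENNReal.ofReal (|e k ω| ^ (2 * c))) (hindep.comp _ fun _ ↦ hf) (hf.comp <| hmeas ·)]
  simp_rw [← lintegral_map hf (hmeas _), hlaw,
    lintegral_abs_rpow_gaussianReal hV hc, prod_const, card_univ]
  rw [ENNReal.ofReal_pow (by have := stableAbsMoment_pos hc; positivity)]

lemma measure_le_prod_abs_rpow_le (hmeas : ∀ k, Measurable (e k)) (hindep : iIndepFun e μ)
    (hlaw : ∀ k, μ.map (e k) = gaussianReal 0 V) (hV : V ≠ 0) (hc : -(1 / 2) < c)
    {a : ℝ} (ha : 0 < a) :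
    μ {ω | a ≤ ∏ k, |e k ω| ^ (2 * c)}
      ≤ ENNReal.ofReal ((((V : ℝ) / 2) ^ c * stableAbsMoment c) ^ Fintype.card ι / a) := by
  calc μ {ω | a ≤ ∏ k, |e k ω| ^ (2 * c)}
      ≤ μ {ω | ENNReal.ofReal a ≤ ∏ k, ENNReal.ofReal (|e k ω| ^ (2 * c))} := by
        refine measure_mono fun ω hω ↦ ?_
        rw [Set.mem_ofPred_eq, ← ENNReal.ofReal_prod_of_nonneg fun k _ ↦ by positivity]
        exact ENNReal.ofReal_le_ofReal hω
    _ ≤ (∫⁻ ω, ∏ k, ENNReal.ofReal (|e k ω| ^ (2 * c)) ∂μ) / ENNReal.ofReal a :=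
        meas_ge_le_lintegral_div (Finset.aemeasurable_fun_prod _ fun k _ ↦ by fun_prop)
          (by simpa using ha) ENNReal.ofReal_ne_top
    _ = _ := by rw [lintegral_prod_abs_rpow hmeas hindep hlaw hV hc, ENNReal.ofReal_div_of_pos ha]

lemma ae_forall_ne_zero (hmeas : ∀ k, Measurable (e k))
    (hlaw : ∀ k, μ.map (e k) = gaussianReal 0 V) (hV : V ≠ 0) : ∀ᵐ ω ∂μ, ∀ k, e k ω ≠ 0 := by
  refine ae_all_iff.2 fun k ↦ ?_
  have : (gaussianReal 0 V) {0} = 0 := gaussianReal_absolutelyContinuous 0 hV (measure_singleton 0)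
  rw [← hlaw k, Measure.map_apply (hmeas k) (measurableSet_singleton 0)] at this
  exact measure_eq_zero_iff_ae_notMem.1 this

end IndependentGaussians

lemma prod_abs_rpow_rpow {ι : Type*} (s : Finset ι) (x : ι → ℝ) (p q : ℝ) :
    (∏ k ∈ s, |x k| ^ p) ^ q = ∏ k ∈ s, |x k| ^ (p * q) := by
  rw [← finsetProd_rpow _ _ fun k _ ↦ by positivity]
  simp_rw [← rpow_mul (abs_nonneg _)]

/-- Li's geometric mean estimator of the scale `s` from samples `x k` of `𝒩(0, 2s)`; the
normalisation makes it unbiased. -/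
noncomputable def geomMeanEstimate {ℓ : ℕ} (x : Fin ℓ → ℝ) : ℝ :=
  (∏ k, |x k| ^ ((2 : ℝ) / ℓ)) / stableAbsMoment (1 / ℓ) ^ ℓ

section GeomMeanEstimate

variable {Ω : Type*} [MeasurableSpace Ω] {μ : Measure Ω} {ℓ : ℕ} {e : Fin ℓ → Ω → ℝ} {s : ℝ}

lemma measure_rpow_le_geomMeanEstimate_rpow_le (hmeas : ∀ k, Measurable (e k))
    (hindep : iIndepFun e μ) (hlaw : ∀ k, μ.map (e k) = gaussianReal 0 (2 * s).toNNReal)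
    (hs : 0 < s) (hℓ : ℓ ≠ 0) {a c : ℝ} (ha : 0 < a) (hc : -(1 / 2) < c) :
    μ {ω | (a * s) ^ c ≤ geomMeanEstimate (e · ω) ^ c}
      ≤ ENNReal.ofReal (exp (ℓ * (log (stableAbsMoment c) - c * log a
          - c * (ℓ * log (stableAbsMoment (1 / ℓ)))))) := by
  have hℓpos : (0 : ℝ) < ℓ := by positivity
  have hF := stableAbsMoment_pos hc
  set M := stableAbsMoment (1 / ℓ) ^ ℓ with hM
  have hMpos : 0 < M := pow_pos (stableAbsMoment_pos (by linarith [one_div_pos.2 hℓpos])) ℓ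
  have hV : (2 * s).toNNReal ≠ 0 := by simpa using hs
  have hV2 : (((2 * s).toNNReal : ℝ) / 2) = s := by simp [hs.le]
  have hsub : {ω | (a * s) ^ c ≤ geomMeanEstimate (e · ω) ^ c}
      ⊆ {ω | ((a * s * M) ^ c) ^ ℓ ≤ ∏ k, |e k ω| ^ (2 * c)} := by
    intro ω hω
    rw [Set.mem_ofPred_eq, geomMeanEstimate, ← hM, div_rpow (by positivity) hMpos.le,
      le_div_iff₀ (by positivity), ← mul_rpow (by positivity) hMpos.le] at hω
    have hprod : ∏ k, |e k ω| ^ (2 * c) = ((∏ k, |e k ω| ^ ((2 : ℝ) / ℓ)) ^ c) ^ ℓ := by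
      rw [prod_abs_rpow_rpow, ← rpow_natCast, prod_abs_rpow_rpow]
      field_simp
    rw [Set.mem_ofPred_eq, hprod]
    exact pow_le_pow_left₀ (by positivity) hω ℓ
  have hbase : s ^ c * stableAbsMoment c / (a * s * M) ^ c
      = exp (log (stableAbsMoment c) - c * log a - c * log M) := by
    rw [exp_sub, exp_sub, exp_log hF, mul_comm c, mul_comm c, ← rpow_def_of_pos ha,
      ← rpow_def_of_pos hMpos, mul_rpow (by positivity) hMpos.le, mul_rpow ha.le hs.le]
    field_simp
  refine (measure_mono hsub).trans ?_
  refine (measure_le_prod_abs_rpow_le hmeas hindep hlaw hV hc (by positivity)).trans_eq ?_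
  rw [hV2, Fintype.card_fin, ← div_pow, hbase, ← exp_nat_mul, hM, log_pow]

lemma geomMeanEstimate_pos {ℓ : ℕ} {x : Fin ℓ → ℝ} (hx : ∀ k, x k ≠ 0) :
    0 < geomMeanEstimate x := by
  have : 0 < stableAbsMoment (1 / ℓ) :=
    stableAbsMoment_pos (by linarith [show (0 : ℝ) ≤ 1 / ℓ by positivity])
  exact div_pos (prod_pos fun k _ ↦ rpow_pos_of_pos (abs_pos.2 (hx k)) _) (pow_pos this ℓ)

lemma measure_lt_geomMeanEstimate_le (hmeas : ∀ k, Measurable (e k))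
    (hindep : iIndepFun e μ) (hlaw : ∀ k, μ.map (e k) = gaussianReal 0 (2 * s).toNNReal)
    (hs : 0 < s) (hℓ : ℓ ≠ 0) {a c : ℝ} (ha : 0 < a) (hc : 0 < c) :
    μ {ω | a * s < geomMeanEstimate (e · ω)}
      ≤ ENNReal.ofReal (exp (-(ℓ * (c * log a - c * eulerMascheroniConstant
          - log (stableAbsMoment c))))) := by
  have hℓpos : (0 : ℝ) < ℓ := by positivity
  have hγ : -eulerMascheroniConstant ≤ ℓ * log (stableAbsMoment (1 / ℓ)) := by
    have := neg_eulerMascheroniConstant_mul_le_log_stableAbsMoment (one_div_pos.2 hℓpos)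
    rwa [mul_one_div, div_le_iff₀ hℓpos, mul_comm] at this
  refine (measure_mono fun ω hω ↦ rpow_le_rpow (by positivity) (le_of_lt hω) hc.le).trans
    ((measure_rpow_le_geomMeanEstimate_rpow_le hmeas hindep hlaw hs hℓ ha (by linarith)).trans
      (ENNReal.ofReal_le_ofReal (exp_le_exp.2 ?_)))
  rw [← mul_neg]
  exact mul_le_mul_of_nonneg_left (by nlinarith) hℓpos.le

lemma measure_geomMeanEstimate_lt_le (hmeas : ∀ k, Measurable (e k))
    (hindep : iIndepFun e μ) (hlaw : ∀ k, μ.map (e k) = gaussianReal 0 (2 * s).toNNReal)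
    (hs : 0 < s) {ℓ₀ : ℕ} (hℓ₀ : 0 < ℓ₀) (hℓ₀ℓ : ℓ₀ ≤ ℓ) {a c : ℝ} (ha : 0 < a) (hc₀ : 0 < c)
    (hc : c < 1 / 2) :
    μ {ω | geomMeanEstimate (e · ω) < a * s}
      ≤ ENNReal.ofReal (exp (-(ℓ * (-c * log a - log (stableAbsMoment (-c))
          - ℓ₀ * c * log (stableAbsMoment (1 / ℓ₀)))))) := by
  have hℓpos : (0 : ℝ) < ℓ := by norm_cast; omega
  have hℓ₀pos : (0 : ℝ) < ℓ₀ := by positivity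
  have hmono : ℓ * log (stableAbsMoment (1 / ℓ)) ≤ ℓ₀ * log (stableAbsMoment (1 / ℓ₀)) := by
    have := log_stableAbsMoment_div_le_div (by linarith [one_div_pos.2 hℓpos])
      (one_div_pos.2 hℓpos).ne' (one_div_pos.2 hℓ₀pos).ne'
      (one_div_le_one_div_of_le hℓ₀pos (by exact_mod_cast hℓ₀ℓ))
    rwa [div_div_eq_mul_div, div_div_eq_mul_div, div_one, div_one, mul_comm,
      mul_comm (log _)] at this
  have hV : (2 * s).toNNReal ≠ 0 := by simpa using hs
  have hsub : {ω | geomMeanEstimate (e · ω) < a * s}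
      ≤ᵐ[μ] {ω | (a * s) ^ (-c) ≤ geomMeanEstimate (e · ω) ^ (-c)} := by
    filter_upwards [ae_forall_ne_zero hmeas hlaw hV] with ω hω hlt
    exact rpow_le_rpow_of_nonpos (geomMeanEstimate_pos hω) (le_of_lt hlt) (by linarith)
  refine (measure_mono_ae hsub).trans
    ((measure_rpow_le_geomMeanEstimate_rpow_le hmeas hindep hlaw hs (by omega) ha
      (by linarith)).trans (ENNReal.ofReal_le_ofReal (exp_le_exp.2 ?_)))
  rw [← mul_neg]
  exact mul_le_mul_of_nonneg_left (by nlinarith) hℓpos.le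

end GeomMeanEstimate

lemma exp_neg_le_of_log_inv_le {x y : ℝ} (hy : 0 < y) (h : log y⁻¹ ≤ x) : exp (-x) ≤ y := by
  rw [log_inv] at h
  simpa [exp_log hy] using exp_le_exp.2 (neg_le.1 h)

end FedChi2

open FedChi2

theorem fed_chi2_utility_general
    {Ω : Type*} [MeasurableSpace Ω] (μ : Measure Ω)
    (ℓ₀ : ℕ) (hℓ₀ : 2 ≤ ℓ₀) (s ε δ : ℝ) (hs : 0 < s)
    (hε0 : 0 < ε) (hε1 : ε < 1) (hδ0 : 0 < δ)
    (C₁ tR C₂ tL : ℝ)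
    (hC₁ : C₁ = 2 / π * Real.arctan (Real.log (1 + ε) / π))
    (htR : tR = C₁ * Real.log (1 + ε) - C₁ * Real.eulerMascheroniConstant
      - Real.log (2 / π * Real.Gamma (2 * C₁) * Real.Gamma (1 - C₁) * Real.sin (π * C₁)))
    (hC₂ : C₂ = 2 * ε / π ^ 2)
    (htL : tL = -C₂ * Real.log (1 - ε)
      - Real.log (-(2 / π) * Real.Gamma (-(2 * C₂)) * Real.Gamma (1 + C₂) * Real.sin (π * C₂))
      - ℓ₀ * C₂ * Real.log (2 / π * Real.Gamma (2 / ℓ₀) * Real.Gamma (1 - 1 / ℓ₀)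
          * Real.sin (π / ℓ₀))) :
    ∀ ℓ : ℕ, ℓ₀ < ℓ → Real.log (2 / δ) ≤ (ℓ : ℝ) * min tR tL →
      ∀ e : Fin ℓ → Ω → ℝ, (∀ k, Measurable (e k)) →
        iIndepFun e μ →
        (∀ k, μ.map (e k) = gaussianReal 0 ((2 * s : ℝ).toNNReal)) →
        ∀ shat : Ω → ℝ,
          (∀ ω, shat ω = (∏ k, |e k ω| ^ ((2 : ℝ) / ℓ))
            / (2 / π * Real.Gamma (2 / ℓ) * Real.Gamma (1 - 1 / ℓ) * Real.sin (π / ℓ)) ^ ℓ) →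
          μ {ω | shat ω < (1 - ε) * s ∨ shat ω > (1 + ε) * s} ≤ ENNReal.ofReal δ := by
  intro ℓ hℓ hmin e hmeas hindep hlaw shat hshat
  obtain ⟨hC₁0, hC₁1⟩ : 0 < C₁ ∧ C₁ < 1 :=
    hC₁ ▸ two_div_pi_mul_arctan_mem_Ioo (div_pos (log_pos (by linarith)) pi_pos)
  have hC₂0 : 0 < C₂ := by rw [hC₂]; positivity
  have hC₂1 : C₂ < 1 / 2 := by rw [hC₂, div_lt_iff₀ (by positivity)]; nlinarith [pi_gt_three]
  rw [← stableAbsMoment_eq_Gamma_mul_sin (sin_pi_mul_ne_zero hC₁0 hC₁1)] at htR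
  rw [← stableAbsMoment_neg (sin_pi_mul_ne_zero hC₂0 (by linarith)),
    ← stableAbsMoment_one_div_natCast hℓ₀] at htL
  obtain rfl : shat = fun ω ↦ geomMeanEstimate (e · ω) := by
    ext ω; rw [hshat, geomMeanEstimate, stableAbsMoment_one_div_natCast (by omega)]
  have hR := measure_lt_geomMeanEstimate_le hmeas hindep hlaw hs (by omega)
    (by linarith : (0 : ℝ) < 1 + ε) hC₁0
  have hL := measure_geomMeanEstimate_lt_le hmeas hindep hlaw hs (by omega : 0 < ℓ₀) hℓ.le
    (by linarith : (0 : ℝ) < 1 - ε) hC₂0 hC₂1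
  rw [← htR] at hR
  rw [← htL] at hL
  have hhalf : ∀ t, min tR tL ≤ t → ENNReal.ofReal (exp (-(ℓ * t))) ≤ ENNReal.ofReal (δ / 2) :=
    fun t ht ↦ ENNReal.ofReal_le_ofReal <| exp_neg_le_of_log_inv_le (by positivity) <| by
      rw [inv_div]; exact hmin.trans (by gcongr)
  calc μ {ω | geomMeanEstimate (e · ω) < (1 - ε) * s ∨ geomMeanEstimate (e · ω) > (1 + ε) * s}
      ≤ μ {ω | geomMeanEstimate (e · ω) < (1 - ε) * s}
        + μ {ω | (1 + ε) * s < geomMeanEstimate (e · ω)} := by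
        rw [Set.ofPred_or]; exact measure_union_le _ _
    _ ≤ ENNReal.ofReal (δ / 2) + ENNReal.ofReal (δ / 2) :=
        add_le_add (hL.trans (hhalf _ (min_le_right _ _))) (hR.trans (hhalf _ (min_le_left _ _)))
    _ = ENNReal.ofReal δ := by rw [← ENNReal.ofReal_add (by positivity) (by positivity), add_halves]

/-- Theorem 4 of the paper (utility of Fed-χ²): the geometric mean estimate ŝ
is a (1 ± ε)-multiplicative approximation of the true statistic s with
probability at least 1 − δ, provided `ℓ · min(t_R, t_L) ≥ log(2/δ)`. -/
theorem fed_chi2_utility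
    {Ω : Type*} [MeasurableSpace Ω] (μ : Measure Ω) [IsProbabilityMeasure μ]
    (ℓ₀ : ℕ) (hℓ₀ : 2 ≤ ℓ₀) (s ε δ : ℝ) (hs : 0 < s)
    (hε0 : 0 < ε) (hε1 : ε < 1) (hδ0 : 0 < δ) (hδ1 : δ < 1)
    (C₁ tR C₂ tL : ℝ)
    (hC₁ : C₁ = 2 / π * Real.arctan (Real.log (1 + ε) / π))
    (htR : tR = C₁ * Real.log (1 + ε) - C₁ * Real.eulerMascheroniConstant
      - Real.log (2 / π * Real.Gamma (2 * C₁) * Real.Gamma (1 - C₁) * Real.sin (π * C₁)))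
    (hC₂ : C₂ = 2 * ε / π ^ 2)
    (htL : tL = -C₂ * Real.log (1 - ε)
      - Real.log (-(2 / π) * Real.Gamma (-(2 * C₂)) * Real.Gamma (1 + C₂) * Real.sin (π * C₂))
      - ℓ₀ * C₂ * Real.log (2 / π * Real.Gamma (2 / ℓ₀) * Real.Gamma (1 - 1 / ℓ₀)
          * Real.sin (π / ℓ₀)))
    (htRpos : 0 < tR) (htLpos : 0 < tL) :
    ∀ ℓ : ℕ, ℓ₀ < ℓ → Real.log (2 / δ) ≤ (ℓ : ℝ) * min tR tL →
      ∀ e : Fin ℓ → Ω → ℝ, (∀ k, Measurable (e k)) →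
        iIndepFun e μ →
        (∀ k, μ.map (e k) = gaussianReal 0 ((2 * s : ℝ).toNNReal)) →
        ∀ shat : Ω → ℝ,
          (∀ ω, shat ω = (∏ k, |e k ω| ^ ((2 : ℝ) / ℓ))
            / (2 / π * Real.Gamma (2 / ℓ) * Real.Gamma (1 - 1 / ℓ) * Real.sin (π / ℓ)) ^ ℓ) →
          μ {ω | shat ω < (1 - ε) * s ∨ shat ω > (1 + ε) * s} ≤ ENNReal.ofReal δ :=
  fed_chi2_utility_general μ ℓ₀ hℓ₀ s ε δ hs hε0 hε1 hδ0 C₁ tR C₂ tL hC₁ htR hC₂ htL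
end

section
/- Let G be an additive commutative group, n a positive integer, e : Fin n → G a family of inputs, and s : Fin n → Fin n → G a symmetric family of masks (i.e., s i j = s j i for all i, j). Define for each i the masked input y_i := e_i − ∑_{j : Fin n, j < i} s i j + ∑_{j : Fin n, i < j} s i j. Then ∑_{i} y_i = ∑_{i} e_i. -/
open Finset

/-! Summed over all clients, the masks subtracted (`j < i`) and the masks added (`i < j`) both
range over every unordered pair of clients exactly once, so by symmetry of `s` they cancel. -/

theorem Finset.sum_sum_filter_lt_eq_sum_sum_filter_gt {ι M : Type*} [Fintype ι] [LT ι]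
    [DecidableLT ι] [AddCommMonoid M] (s : ι → ι → M) (hs : ∀ i j, s i j = s j i) :
    ∑ i, ∑ j ∈ univ.filter (· < i), s i j = ∑ i, ∑ j ∈ univ.filter (i < ·), s i j := by
  simp only [sum_filter]
  rw [sum_comm]
  simp only [hs]

theorem secure_aggregation_correct_general
    {G : Type*} [AddCommGroup G] (n : ℕ)
    (e : Fin n → G) (s : Fin n → Fin n → G)
    (hsym : ∀ i j, s i j = s j i)
    (y : Fin n → G)
    (hy : ∀ i, y i = e i - (∑ j ∈ univ.filter (fun j => j < i), s i j)
      + ∑ j ∈ univ.filter (fun j => i < j), s i j) :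
    ∑ i, y i = ∑ i, e i := by
  simp only [hy, sum_add_distrib, sum_sub_distrib,
    sum_sum_filter_lt_eq_sum_sum_filter_gt s hsym, sub_add_cancel]

/-- Correctness of the secure aggregation protocol (Algorithm 3 of the paper):
the pairwise masks cancel in the sum, so the server recovers the sum of the
true inputs. -/
theorem secure_aggregation_correct
    {G : Type*} [AddCommGroup G] (n : ℕ) (hn : 0 < n)
    (e : Fin n → G) (s : Fin n → Fin n → G)
    (hsym : ∀ i j, s i j = s j i)
    (y : Fin n → G)
    (hy : ∀ i, y i = e i - (∑ j ∈ univ.filter (fun j => j < i), s i j)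
      + ∑ j ∈ univ.filter (fun j => i < j), s i j) :
    ∑ i, y i = ∑ i, e i :=
  secure_aggregation_correct_general n e s hsym y hy
end
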